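/- The jump sets of TV regularization and TV flow solutions on graphs do not evolve monotonically: there exist a finite set V, an oriented edge set E ⊆ V × V with (v,w) ∈ E implying (w,v) ∉ E whose underlying undirected graph is connected, a datum f ∈ ℝ^V, parameters 0 ≤ β₁ < β₂ with Γ_{β₁} ⊊ Γ_{β₂}, and a TV flow solution u with datum f and times 0 ≤ s₁ < s₂ with Γ(s₁) ⊊ Γ(s₂). Here Γ_α = {(v,w) ∈ E : u_α(v) ≠ u_α(w)} is the jump set of the ROF minimizer u_α and Γ(t) = {(v,w) ∈ E : u(t)(v) ≠ u(t)(w)} is the jump set of the flow solution. -/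

import Mathlib

open Finset MeasureTheory

noncomputable section

/-- The graph total variation `J(u) = ∑_{(v,w) ∈ E} |u(w) - u(v)|`. -/
def tvJ {V : Type*} (E : Finset (V × V)) (u : V → ℝ) : ℝ :=
  ∑ e ∈ E, |u e.2 - u e.1|

/-- The subdifferential of the graph total variation at `u`. -/
def subdiffJ {V : Type*} [Fintype V] (E : Finset (V × V)) (u : V → ℝ) : Set (V → ℝ) :=
  {us | ∀ h : V → ℝ, (∑ v, (h v - u v) * us v) + tvJ E u ≤ tvJ E h}

/-- The divergence of an edge function `H`:
`(div H)(v) = ∑_{(w,v) ∈ E} H((w,v)) - ∑_{(v,w) ∈ E} H((v,w))`. -/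
def gdiv {V : Type*} [DecidableEq V] (E : Finset (V × V)) (H : V × V → ℝ) : V → ℝ :=
  fun v => (∑ e ∈ E, if e.2 = v then H e else 0) - (∑ e ∈ E, if e.1 = v then H e else 0)

/-- The ℓ² norm on `ℝ^V`. -/
def norm2 {V : Type*} [Fintype V] (u : V → ℝ) : ℝ :=
  Real.sqrt (∑ v, (u v) ^ 2)

/-- `u` minimizes `w ↦ ½‖f - w‖₂² + α J(w)` over `ℝ^V`. -/
def IsROFMinimizer {V : Type*} [Fintype V] (E : Finset (V × V)) (f : V → ℝ) (α : ℝ)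
    (u : V → ℝ) : Prop :=
  ∀ w : V → ℝ,
    (1 / 2) * (∑ v, (f v - u v) ^ 2) + α * tvJ E u ≤
      (1 / 2) * (∑ v, (f v - w v) ^ 2) + α * tvJ E w

/-- `u : [0,∞) → ℝ^V` is a TV flow solution with datum `f`: it is Lipschitz on `[0,∞)`,
`u(0) = f`, and `-u'(t) ∈ ∂J(u(t))` for almost every `t > 0`. -/
def IsTVFlowSolution {V : Type*} [Fintype V] (E : Finset (V × V)) (f : V → ℝ)
    (u : ℝ → V → ℝ) : Prop :=
  u 0 = f ∧ (∃ L : NNReal, LipschitzOnWith L u (Set.Ici 0)) ∧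
    ∃ u' : ℝ → V → ℝ, ∀ᵐ t ∂(volume : Measure ℝ), 0 < t →
      HasDerivAt u (u' t) t ∧ (fun v => -(u' t v)) ∈ subdiffJ E (u t)

/-! On the double star (two adjacent centres, each carrying two leaves) take the datum that
vanishes at the centres and is `1` on the leaves of one centre, `-1` on those of the other, so
the central edge does not jump. Each centre is pulled towards its own leaves: for `t ≤ 1/2` the
flow takes the values `±t` at the centres and `±(1 - t)` at the leaves, so the central edge
starts to jump while the leaf edges keep jumping; at `t = 1/2` each centre merges with its
leaves, and the solution reaches `0` at `t = 2`. The state at `t = 1/4` is also the ROF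
minimizer for `α = 1/4`. Every optimality condition is certified by a subgradient `div H`,
where `|H| ≤ 1` and `H` is the sign of the jump on each jumping edge. -/

section TotalVariation

variable {V : Type*} [Fintype V] {E : Finset (V × V)}

theorem sum_mul_gdiv [DecidableEq V] (H : V × V → ℝ) (h : V → ℝ) :
    ∑ v, h v * gdiv E H v = ∑ e ∈ E, H e * (h e.2 - h e.1) := by
  simp only [gdiv, mul_sub, Finset.mul_sum, mul_ite, mul_zero, sum_sub_distrib]
  rw [Finset.sum_comm, Finset.sum_comm (s := univ)]
  simp [mul_comm]

theorem gdiv_mem_subdiffJ [DecidableEq V] {H : V × V → ℝ} {u : V → ℝ}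
    (hH : ∀ e ∈ E, |H e| ≤ 1) (hHu : ∀ e ∈ E, H e * (u e.2 - u e.1) = |u e.2 - u e.1|) :
    gdiv E H ∈ subdiffJ E u := by
  intro h
  have hJu : tvJ E u = ∑ v, u v * gdiv E H v := by
    rw [sum_mul_gdiv]
    exact (sum_congr rfl hHu).symm
  calc ∑ v, (h v - u v) * gdiv E H v + tvJ E u = ∑ e ∈ E, H e * (h e.2 - h e.1) := by
        simp only [sub_mul, sum_sub_distrib, hJu, sum_mul_gdiv]
        ring
    _ ≤ tvJ E h := sum_le_sum fun e he => (le_abs_self _).trans <| by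
        rw [abs_mul]
        exact mul_le_of_le_one_left (abs_nonneg _) (hH e he)

theorem isROFMinimizer_zero (f : V → ℝ) : IsROFMinimizer E f 0 f := by
  intro w
  simp only [sub_self, zero_mul, zero_pow two_ne_zero, sum_const_zero, mul_zero, add_zero]
  positivity

theorem isROFMinimizer_of_mem_subdiffJ {f u p : V → ℝ} {α : ℝ} (hα : 0 ≤ α)
    (hp : p ∈ subdiffJ E u) (hf : ∀ v, f v - u v = α * p v) : IsROFMinimizer E f α u := by
  intro w
  have hsq : ∀ v, (f v - w v) ^ 2 =
      (f v - u v) ^ 2 - 2 * α * ((w v - u v) * p v) + (w v - u v) ^ 2 :=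
    fun v => by linear_combination (-2 * (w v - u v)) * hf v
  simp only [hsq, sum_add_distrib, sum_sub_distrib, ← mul_sum]
  nlinarith [mul_le_mul_of_nonneg_left (hp w) hα,
    sum_nonneg fun v (_ : v ∈ univ) => sq_nonneg (w v - u v)]

def SatisfiesTVFlowAt (E : Finset (V × V)) (u : ℝ → V → ℝ) (t : ℝ) : Prop :=
  ∃ v, HasDerivAt u v t ∧ -v ∈ subdiffJ E (u t)

theorem isTVFlowSolution_of_ae {f : V → ℝ} {u : ℝ → V → ℝ} {L : NNReal} (h0 : u 0 = f)
    (hL : LipschitzOnWith L u (Set.Ici 0)) (hu : ∀ᵐ t, 0 < t → SatisfiesTVFlowAt E u t) :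
    IsTVFlowSolution E f u := by
  refine ⟨h0, ⟨L, hL⟩, deriv u, hu.mono fun t ht hpos => ?_⟩
  obtain ⟨v, hv, hsub⟩ := ht hpos
  rw [hv.deriv]
  exact ⟨hv, hsub⟩

end TotalVariation

open Topology

namespace DoubleStar

def edges : Finset (Fin 6 × Fin 6) := {(0, 1), (0, 2), (0, 3), (1, 4), (1, 5)}

theorem swap_notMem_edges : ∀ v w : Fin 6, (v, w) ∈ edges → (w, v) ∉ edges := by decide

theorem connected : (SimpleGraph.fromRel fun v w : Fin 6 => (v, w) ∈ edges).Connected := by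
  set G := SimpleGraph.fromRel fun v w : Fin 6 => (v, w) ∈ edges
  have adj : ∀ v w, (v, w) ∈ edges → G.Reachable v w := fun v w h =>
    SimpleGraph.Adj.reachable <| (SimpleGraph.fromRel_adj _ v w).2
      ⟨fun hvw => swap_notMem_edges v w h (hvw ▸ h), Or.inl h⟩
  refine (SimpleGraph.connected_iff_exists_forall_reachable G).2 ⟨0, fun v => ?_⟩
  fin_cases v
  · rfl
  · exact adj 0 1 (by decide)
  · exact adj 0 2 (by decide)
  · exact adj 0 3 (by decide)
  · exact (adj 0 1 (by decide)).trans (adj 1 4 (by decide))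
  · exact (adj 0 1 (by decide)).trans (adj 1 5 (by decide))

def profile (a b : ℝ) : Fin 6 → ℝ := ![a, -a, b, b, -b, -b]

theorem neg_profile (a b : ℝ) : -profile a b = profile (-a) (-b) := by
  funext v
  fin_cases v <;> simp [profile]

def signField (μ ν : ℝ) (e : Fin 6 × Fin 6) : ℝ :=
  if e = (0, 1) then -μ else if e.1 = 0 then ν else -ν

theorem gdiv_signField (μ ν : ℝ) : gdiv edges (signField μ ν) = profile (μ - 2 * ν) ν := by
  funext v
  fin_cases v <;> simp [gdiv, edges, signField, profile] <;> ring

theorem profile_mem_subdiffJ {a b μ ν : ℝ} (hμ : |μ| ≤ 1) (hν : |ν| ≤ 1)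
    (ha : μ * a = |a|) (hb : ν * (b - a) = |b - a|) :
    profile (μ - 2 * ν) ν ∈ subdiffJ edges (profile a b) := by
  rw [← gdiv_signField]
  apply gdiv_mem_subdiffJ
  · simp [edges, signField, hμ, hν]
  · simp only [edges, Fin.isValue, mem_insert, mem_singleton, signField, profile, ite_mul,
      neg_mul, forall_eq_or_imp, ↓reduceIte, Matrix.cons_val_one, Matrix.cons_val_zero,
      Prod.mk.injEq, Fin.reduceEq, and_false, Matrix.cons_val, one_ne_zero, and_self,
      sub_neg_eq_add, forall_eq, and_self_left]
    refine ⟨?_, hb, ?_⟩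
    · rw [show -a - a = -(2 * a) by ring, abs_neg, abs_mul, abs_two]
      linear_combination 2 * ha
    · rw [show -b + a = -(b - a) by ring, abs_neg]
      linear_combination hb

theorem jumpSet_profile_zero_ssubset {a b b' : ℝ} (ha : a ≠ 0) (hab : a ≠ b') :
    {e : Fin 6 × Fin 6 | e ∈ edges ∧ profile 0 b e.1 ≠ profile 0 b e.2} ⊂
      {e : Fin 6 × Fin 6 | e ∈ edges ∧ profile a b' e.1 ≠ profile a b' e.2} := by
  have hcenter : a ≠ -a := fun h => ha (by linarith)
  refine ⟨?_, fun hsub => ?_⟩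
  · rintro e ⟨he, -⟩
    refine ⟨he, ?_⟩
    simp only [edges, mem_insert, mem_singleton] at he
    rcases he with rfl | rfl | rfl | rfl | rfl <;> simp [profile, hab, hcenter]
  · have hcentral : ((0 : Fin 6), (1 : Fin 6)) ∈ _ :=
      hsub ⟨by decide, by simpa [profile] using hcenter⟩
    exact hcentral.2 (by simp [profile])

theorem isROFMinimizer_profile :
    IsROFMinimizer edges (profile 0 1) (1 / 4) (profile (1 / 4) (3 / 4)) := by
  refine isROFMinimizer_of_mem_subdiffJ (by norm_num)
    (profile_mem_subdiffJ (μ := 1) (ν := 1) (by norm_num) (by norm_num) (by norm_num)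
      (by norm_num))
    fun v => ?_
  fin_cases v <;> norm_num [profile]

def flowCenter (t : ℝ) : ℝ := max (min t ((2 - t) / 3)) 0

def flowLeaf (t : ℝ) : ℝ := max (1 - t) (max ((2 - t) / 3) 0)

def flow (t : ℝ) : Fin 6 → ℝ := profile (flowCenter t) (flowLeaf t)

theorem flow_of_le_half {t : ℝ} (h₀ : 0 ≤ t) (h : t ≤ 1 / 2) :
    flow t = profile t (1 - t) := by
  rw [flow, flowCenter, flowLeaf, min_eq_left (by linarith), max_eq_left h₀,
    max_eq_left (max_le (by linarith) (by linarith))]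

theorem flow_of_mem_Icc {t : ℝ} (h₁ : 1 / 2 ≤ t) (h₂ : t ≤ 2) :
    flow t = profile ((2 - t) / 3) ((2 - t) / 3) := by
  have h₀ : 0 ≤ (2 - t) / 3 := by linarith
  rw [flow, flowCenter, flowLeaf, min_eq_right (by linarith), max_eq_left h₀,
    max_eq_right (by linarith)]

theorem flow_of_two_le {t : ℝ} (h : 2 ≤ t) : flow t = profile 0 0 := by
  rw [flow, flowCenter, flowLeaf, max_eq_right ((min_le_right _ _).trans (by linarith)),
    max_eq_right (by linarith : (2 - t) / 3 ≤ 0), max_eq_right (by linarith)]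

theorem lipschitzWith_profile {K : NNReal} {a b : ℝ → ℝ} (ha : LipschitzWith K a)
    (hb : LipschitzWith K b) : LipschitzWith K fun t => profile (a t) (b t) := by
  refine LipschitzWith.of_dist_le_mul fun x y => (dist_pi_le_iff (by positivity)).2 fun i => ?_
  fin_cases i <;> simp [profile, ha.dist_le_mul, hb.dist_le_mul]

theorem exists_lipschitzWith_flow : ∃ K, LipschitzWith K flow := by
  have hline : LipschitzWith 1 fun t : ℝ => (2 - t) / 3 := .of_dist_le_mul fun x y => by
    rw [Real.dist_eq, Real.dist_eq, show (2 - x) / 3 - (2 - y) / 3 = -(x - y) / 3 by ring,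
      abs_div, abs_neg, abs_of_pos (three_pos : (0 : ℝ) < 3), NNReal.coe_one, one_mul]
    linarith [abs_nonneg (x - y)]
  have hcenter := (LipschitzWith.id.min hline).max_const 0
  have hleaf := (IsometryEquiv.subLeft (1 : ℝ)).isometry.lipschitz.max (hline.max_const 0)
  exact ⟨_, lipschitzWith_profile (hcenter.weaken (le_max_left _ (max 1 _)))
    (hleaf.weaken (le_max_right _ _))⟩

theorem hasDerivAt_profile {a b : ℝ → ℝ} {a' b' t : ℝ} (ha : HasDerivAt a a' t)
    (hb : HasDerivAt b b' t) : HasDerivAt (fun s => profile (a s) (b s)) (profile a' b') t := by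
  rw [hasDerivAt_pi]
  intro i
  fin_cases i <;> simp only [profile] <;>
    first | exact ha | exact ha.neg | exact hb | exact hb.neg

theorem satisfiesTVFlowAt_of_eventuallyEq {a b : ℝ → ℝ} {t μ ν : ℝ}
    (hloc : flow =ᶠ[𝓝 t] fun s => profile (a s) (b s))
    (ha : HasDerivAt a (2 * ν - μ) t) (hb : HasDerivAt b (-ν) t)
    (hμ : |μ| ≤ 1) (hν : |ν| ≤ 1)
    (hμa : μ * a t = |a t|) (hνb : ν * (b t - a t) = |b t - a t|) :
    SatisfiesTVFlowAt edges flow t := by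
  refine ⟨_, (hasDerivAt_profile ha hb).congr_of_eventuallyEq hloc, ?_⟩
  rw [neg_profile, hloc.eq_of_nhds, neg_sub, neg_neg]
  exact profile_mem_subdiffJ hμ hν hμa hνb

theorem ae_satisfiesTVFlowAt_flow :
    ∀ᵐ t ∂(volume : Measure ℝ), 0 < t → SatisfiesTVFlowAt edges flow t := by
  filter_upwards [volume.ae_ne (1 / 2), volume.ae_ne 2] with t h₁ h₂ h₀
  rcases h₁.lt_or_gt with h₁ | h₁
  · have hloc : flow =ᶠ[𝓝 t] fun s => profile s (1 - s) := by
      filter_upwards [Ioo_mem_nhds h₀ h₁] with s hs using flow_of_le_half hs.1.le hs.2.le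
    exact satisfiesTVFlowAt_of_eventuallyEq hloc (μ := 1) (ν := 1)
      ((hasDerivAt_id t).congr_deriv (by norm_num)) ((hasDerivAt_id t).const_sub 1)
      (by norm_num) (by norm_num) (by simp [abs_of_pos h₀])
      (by rw [abs_of_pos (by linarith)]; ring)
  rcases h₂.lt_or_gt with h₂ | h₂
  · have hloc : flow =ᶠ[𝓝 t] fun s => profile ((2 - s) / 3) ((2 - s) / 3) := by
      filter_upwards [Ioo_mem_nhds h₁ h₂] with s hs using flow_of_mem_Icc hs.1.le hs.2.le
    have hline : HasDerivAt (fun s => (2 - s) / 3) (-1 / 3) t :=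
      ((hasDerivAt_id t).const_sub 2).div_const 3
    exact satisfiesTVFlowAt_of_eventuallyEq hloc (μ := 1) (ν := 1 / 3)
      (hline.congr_deriv (by norm_num)) (hline.congr_deriv (by norm_num))
      (by norm_num) (by norm_num) (by rw [abs_of_pos (by linarith)]; ring) (by simp)
  · have hloc : flow =ᶠ[𝓝 t] fun _ => profile 0 0 := by
      filter_upwards [Ioi_mem_nhds h₂] with s hs using flow_of_two_le hs.le
    exact satisfiesTVFlowAt_of_eventuallyEq hloc (μ := 0) (ν := 0)
      ((hasDerivAt_const t 0).congr_deriv (by norm_num))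
      ((hasDerivAt_const t 0).congr_deriv (by norm_num)) (by norm_num) (by norm_num) (by simp)
      (by simp)

theorem isTVFlowSolution_flow : IsTVFlowSolution edges (profile 0 1) flow := by
  obtain ⟨K, hK⟩ := exists_lipschitzWith_flow
  exact isTVFlowSolution_of_ae (by rw [flow_of_le_half le_rfl (by norm_num), sub_zero])
    hK.lipschitzOnWith ae_satisfiesTVFlowAt_flow

end DoubleStar

open DoubleStar in
/-- the jump sets of ROF minimizers and TV flow solutions on graphs do not
evolve monotonically. -/
theorem jump_sets_not_monotone :
    ∃ (V : Type) (iV : Fintype V) (_ : Nonempty V) (E : Finset (V × V)),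
      (∀ v w : V, (v, w) ∈ E → (w, v) ∉ E) ∧
      (SimpleGraph.fromRel (fun v w : V => (v, w) ∈ E)).Connected ∧
      ∃ f : V → ℝ,
        (∃ (β₁ β₂ : ℝ) (u₁ u₂ : V → ℝ), 0 ≤ β₁ ∧ β₁ < β₂ ∧
          @IsROFMinimizer V iV E f β₁ u₁ ∧ @IsROFMinimizer V iV E f β₂ u₂ ∧
          {e : V × V | e ∈ E ∧ u₁ e.1 ≠ u₁ e.2} ⊂
            {e : V × V | e ∈ E ∧ u₂ e.1 ≠ u₂ e.2}) ∧
        (∃ (u : ℝ → V → ℝ) (s₁ s₂ : ℝ), @IsTVFlowSolution V iV E f u ∧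
          0 ≤ s₁ ∧ s₁ < s₂ ∧
          {e : V × V | e ∈ E ∧ u s₁ e.1 ≠ u s₁ e.2} ⊂
            {e : V × V | e ∈ E ∧ u s₂ e.1 ≠ u s₂ e.2}) := by
  have hjump := jumpSet_profile_zero_ssubset (b := 1) (a := 1 / 4) (b' := 3 / 4)
    (by norm_num) (by norm_num)
  refine ⟨Fin 6, inferInstance, ⟨0⟩, edges, swap_notMem_edges, connected, profile 0 1,
    ⟨0, 1 / 4, _, _, le_rfl, by norm_num, isROFMinimizer_zero _, isROFMinimizer_profile, hjump⟩,
    ⟨flow, 0, 1 / 4, isTVFlowSolution_flow, le_rfl, by norm_num, ?_⟩⟩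
  rw [flow_of_le_half le_rfl (by norm_num), flow_of_le_half (by norm_num) (by norm_num)]
  norm_num
  exact hjump

end
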